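/- Under the hypotheses that A is real symmetric with spectral gap (|λ_j| < λ₁ for j ≠ 1), pλ₁ > 1, the leading eigenvector U₁ has all entries nonnegative, and U₁ᵀ y < 0, there exists T₀ such that for all T ≥ T₀ and every coordinate i with (U₁)_i > 0, the i-th entry of CC(A,p,T,y) is negative. -/
import Mathlib


open Matrix Finset Filter Topology

/-- Contextual centrality: `CC(A, p, T, y) = (∑_{t=0}^{T} (pA)^t) y`. -/
noncomputable def CC {n : ℕ} (A : Matrix (Fin n) (Fin n) ℝ) (p : ℝ) (T : ℕ)
    (y : Fin n → ℝ) : Fin n → ℝ :=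
  (∑ t ∈ Finset.range (T + 1), (p • A) ^ t).mulVec y

lemma sum_mulVec' {n : ℕ} {ι : Type*} (s : Finset ι) (M : ι → Matrix (Fin n) (Fin n) ℝ)
    (v : Fin n → ℝ) : (∑ t ∈ s, M t).mulVec v = ∑ t ∈ s, (M t).mulVec v := by
  ext i
  simp only [Matrix.mulVec, dotProduct, Matrix.sum_apply, Finset.sum_apply,
    Finset.sum_mul]
  exact Finset.sum_comm

lemma mulVec_sum' {n : ℕ} {ι : Type*} (s : Finset ι) (M : Matrix (Fin n) (Fin n) ℝ)
    (v : ι → Fin n → ℝ) : M.mulVec (∑ t ∈ s, v t) = ∑ t ∈ s, M.mulVec (v t) := by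
  ext i
  simp only [Matrix.mulVec, dotProduct, Finset.sum_apply, Finset.mul_sum]
  exact Finset.sum_comm

theorem cc_eventually_negative {n : ℕ} (A : Matrix (Fin n) (Fin n) ℝ) (hA : A.IsSymm)
    (U : Fin n → Fin n → ℝ) (lam : Fin n → ℝ)
    (heig : ∀ j, A.mulVec (U j) = lam j • U j)
    (horth : ∀ j k, U j ⬝ᵥ U k = if j = k then (1 : ℝ) else 0)
    (j1 : Fin n) (hgap : ∀ j, j ≠ j1 → |lam j| < lam j1)
    (p : ℝ) (hp : 0 < p) (hplam : 1 < p * lam j1)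
    (hU1 : ∀ i, 0 ≤ U j1 i)
    (y : Fin n → ℝ) (hy : U j1 ⬝ᵥ y < 0) :
    ∃ T₀ : ℕ, ∀ T ≥ T₀, ∀ i : Fin n, 0 < U j1 i → CC A p T y i < 0 := by
  set r : ℝ := p * lam j1 with hr_def
  have hr : 1 < r := hplam
  have hr0 : (0:ℝ) < r := lt_trans one_pos hr
  set c : Fin n → ℝ := fun j => U j ⬝ᵥ y with hc_def
  -- orthogonality matrix
  set Q : Matrix (Fin n) (Fin n) ℝ := Matrix.of U with hQ_def
  have hQQ : Q * Qᵀ = 1 := by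
    ext j k
    have := horth j k
    simp only [dotProduct] at this
    simp [Matrix.mul_apply, Matrix.transpose_apply, Matrix.one_apply, hQ_def, this]
  have hQ'Q : Qᵀ * Q = 1 := mul_eq_one_comm.mp hQQ
  -- expansion of y in the eigenbasis
  have hyexp : y = ∑ j, c j • U j := by
    have h1 : (Qᵀ * Q).mulVec y = y := by rw [hQ'Q, Matrix.one_mulVec]
    ext i
    rw [← h1, ← Matrix.mulVec_mulVec]
    simp only [Finset.sum_apply, Pi.smul_apply, smul_eq_mul, Matrix.mulVec,
      dotProduct, Matrix.transpose_apply, hQ_def, Matrix.of_apply, hc_def]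
    exact Finset.sum_congr rfl fun j _ => by rw [mul_comm]
  -- eigenvector powers
  have hbase : ∀ j, (p • A).mulVec (U j) = (p * lam j) • U j := by
    intro j
    rw [Matrix.smul_mulVec, heig j, smul_smul]
  have hpow : ∀ (t : ℕ) (j : Fin n), ((p • A) ^ t).mulVec (U j) = (p * lam j) ^ t • U j := by
    intro t j
    induction t with
    | zero => simp
    | succ t ih =>
      rw [pow_succ, ← Matrix.mulVec_mulVec, hbase, Matrix.mulVec_smul, ih,
        smul_smul, pow_succ, mul_comm]
  -- key formula
  have key : ∀ (T : ℕ) (i : Fin n),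
      CC A p T y i = ∑ j, c j * (∑ t ∈ Finset.range (T + 1), (p * lam j) ^ t) * U j i := by
    intro T i
    have : CC A p T y = ∑ j, (c j * (∑ t ∈ Finset.range (T + 1), (p * lam j) ^ t)) • U j := by
      unfold CC
      rw [hyexp, mulVec_sum']
      refine Finset.sum_congr rfl fun j _ => ?_
      rw [Matrix.mulVec_smul, sum_mulVec']
      have : ∑ t ∈ Finset.range (T + 1), ((p • A) ^ t).mulVec (U j)
          = (∑ t ∈ Finset.range (T + 1), (p * lam j) ^ t) • U j := by
        rw [Finset.sum_smul]
        exact Finset.sum_congr rfl fun t _ => hpow t j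
      rw [this, smul_smul]
    rw [this]
    simp [Finset.sum_apply, mul_assoc]
  -- per-coordinate eventual negativity
  have hev : ∀ i : Fin n, ∀ᶠ T in atTop, (0 < U j1 i → CC A p T y i < 0) := by
    intro i
    by_cases hu : 0 < U j1 i
    swap
    · exact Filter.Eventually.of_forall fun T h => absurd h hu
    have hc1 : c j1 < 0 := hy
    have hcu : c j1 * U j1 i < 0 := mul_neg_of_neg_of_pos hc1 hu
    set m : Fin n → ℝ := fun j => max 1 |p * lam j| with hm_def
    have hm1 : ∀ j, (1:ℝ) ≤ m j := fun j => le_max_left _ _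
    have hm0 : ∀ j, (0:ℝ) < m j := fun j => lt_of_lt_of_le one_pos (hm1 j)
    have hmr : ∀ j ∈ Finset.univ.erase j1, m j < r := by
      intro j hj
      have hj' : j ≠ j1 := Finset.ne_of_mem_erase hj
      have : |p * lam j| < r := by
        rw [abs_mul, abs_of_pos hp]
        exact mul_lt_mul_of_pos_left (hgap j hj') hp
      exact max_lt hr this
    -- the dominating function
    set g : ℕ → ℝ := fun T => (c j1 * U j1 i) * r ^ T +
      ∑ j ∈ Finset.univ.erase j1, |c j * U j i| * (((T : ℝ) + 1) * m j ^ T) with hg_def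
    have hfg : ∀ T, CC A p T y i ≤ g T := by
      intro T
      rw [key T i, ← Finset.add_sum_erase _ _ (Finset.mem_univ j1)]
      refine add_le_add ?_ (Finset.sum_le_sum ?_)
      · -- main term
        have hS : r ^ T ≤ ∑ t ∈ Finset.range (T + 1), r ^ t :=
          Finset.single_le_sum (f := fun t => r ^ t)
            (fun t _ => pow_nonneg hr0.le t) (by simp)
        have := mul_le_mul_of_nonpos_left hS hcu.le
        calc c j1 * (∑ t ∈ Finset.range (T + 1), (p * lam j1) ^ t) * U j1 i
            = (c j1 * U j1 i) * ∑ t ∈ Finset.range (T + 1), r ^ t := by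
              rw [← hr_def]; ring
          _ ≤ (c j1 * U j1 i) * r ^ T := this
      · -- error terms
        intro j hj
        set S : ℝ := ∑ t ∈ Finset.range (T + 1), (p * lam j) ^ t with hS_def
        have hSb : |S| ≤ ((T : ℝ) + 1) * m j ^ T := by
          calc |S| ≤ ∑ t ∈ Finset.range (T + 1), |(p * lam j) ^ t| :=
                Finset.abs_sum_le_sum_abs _ _
            _ ≤ ∑ t ∈ Finset.range (T + 1), m j ^ T := by
                refine Finset.sum_le_sum fun t ht => ?_
                rw [abs_pow]
                calc |p * lam j| ^ t ≤ m j ^ t :=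
                      pow_le_pow_left₀ (abs_nonneg _) (le_max_right _ _) t
                  _ ≤ m j ^ T :=
                      pow_le_pow_right₀ (hm1 j) (Finset.mem_range_succ_iff.mp ht)
            _ = ((T : ℝ) + 1) * m j ^ T := by
                rw [Finset.sum_const, Finset.card_range, nsmul_eq_mul]
                push_cast; ring
        calc c j * S * U j i ≤ |c j * S * U j i| := le_abs_self _
          _ = |c j * U j i| * |S| := by rw [abs_mul, abs_mul, abs_mul]; ring
          _ ≤ |c j * U j i| * (((T : ℝ) + 1) * m j ^ T) :=
              mul_le_mul_of_nonneg_left hSb (abs_nonneg _)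
    -- g tends to -infinity
    have hg_tendsto : Tendsto g atTop atBot := by
      have hterm_eq : ∀ (T : ℕ) (j : Fin n),
          r ^ T * (|c j * U j i| * (((T : ℝ) + 1) * (m j / r) ^ T))
            = |c j * U j i| * (((T : ℝ) + 1) * m j ^ T) := by
        intro T j
        have hrT : (r : ℝ) ^ T ≠ 0 := pow_ne_zero T hr0.ne'
        rw [div_pow]
        field_simp
      have hg_eq : ∀ T : ℕ, g T = r ^ T * ((c j1 * U j1 i) +
          ∑ j ∈ Finset.univ.erase j1, |c j * U j i| * (((T : ℝ) + 1) * (m j / r) ^ T)) := by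
        intro T
        simp only [hg_def]
        rw [mul_add, Finset.mul_sum]
        congr 1
        · ring
        exact Finset.sum_congr rfl fun j _ => (hterm_eq T j).symm
      have hterm : ∀ j ∈ Finset.univ.erase j1,
          Tendsto (fun T : ℕ => |c j * U j i| * (((T : ℝ) + 1) * (m j / r) ^ T)) atTop (𝓝 0) := by
        intro j hj
        have hq0 : (0:ℝ) ≤ m j / r := div_nonneg (hm0 j).le hr0.le
        have hq1 : m j / r < 1 := (div_lt_one hr0).mpr (hmr j hj)
        have h2 : Tendsto (fun T : ℕ => (m j / r) ^ T) atTop (𝓝 0) :=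
          tendsto_pow_atTop_nhds_zero_of_lt_one hq0 hq1
        have hrm1 : 1 < r / m j := (one_lt_div (hm0 j)).mpr (hmr j hj)
        have h1 : Tendsto (fun T : ℕ => (T : ℝ) * (m j / r) ^ T) atTop (𝓝 0) := by
          have := tendsto_pow_const_div_const_pow_of_one_lt 1 hrm1
          refine this.congr fun T => ?_
          rw [pow_one, div_eq_mul_inv, ← inv_pow, inv_div]
        have hsum : Tendsto (fun T : ℕ => ((T : ℝ) + 1) * (m j / r) ^ T) atTop (𝓝 0) := by
          have := h1.add h2
          rw [add_zero] at this
          refine this.congr fun T => ?_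
          ring
        have := hsum.const_mul (|c j * U j i|)
        simpa using this
      have hsum0 : Tendsto (fun T : ℕ =>
          ∑ j ∈ Finset.univ.erase j1, |c j * U j i| * (((T : ℝ) + 1) * (m j / r) ^ T))
          atTop (𝓝 0) := by
        have := tendsto_finset_sum (Finset.univ.erase j1) hterm
        simpa using this
      have hh : Tendsto (fun T : ℕ => (c j1 * U j1 i) +
          ∑ j ∈ Finset.univ.erase j1, |c j * U j i| * (((T : ℝ) + 1) * (m j / r) ^ T))
          atTop (𝓝 (c j1 * U j1 i)) := by
        simpa using ((tendsto_const_nhds : Tendsto (fun _ : ℕ => c j1 * U j1 i) atTop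
          (𝓝 (c j1 * U j1 i))).add hsum0)
      have hrp : Tendsto (fun T : ℕ => r ^ T) atTop atTop :=
        tendsto_pow_atTop_atTop_of_one_lt hr
      have := hrp.atTop_mul_neg hcu hh
      exact Tendsto.congr (fun T => (hg_eq T).symm) this
    have hf_tendsto : Tendsto (fun T => CC A p T y i) atTop atBot :=
      tendsto_atBot_mono hfg hg_tendsto
    exact (hf_tendsto.eventually_lt_atBot 0).mono fun T hT _ => hT
  have := eventually_all.mpr hev
  rw [Filter.eventually_atTop] at this
  obtain ⟨T₀, hT₀⟩ := this
  exact ⟨T₀, hT₀⟩
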